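/- arXiv:1309.2982 — 2 statements merged into one kernel-verified Lean document; each statement's English description precedes it below -/
import Mathlib

section
/- Let $\mathcal{K} \subset \{1\} \times \mathbb{R}_{\ge 0}^T$ be a reasonable path space, i.e., for every path $(s_0=1,\ldots,s_T) \in \mathcal{K}$ and every $t$: (i) if $s_t > 0$ then there exist two paths in $\mathcal{K}$ agreeing with $s$ up to time $t$, one with $(t+1)$-th coordinate strictly less than $s_t$ and one strictly greater; (ii) if $s_t = 0$ then $s_k = 0$ for all $k \ge t+1$. Then for any predictable trading strategy $H$ (a family $H_t(s_1,\ldots,s_t)$ of real-valued functions), if $(H\cdot S)_T(s) = \sum_{t=0}^{T-1} H_t(s_1,\ldots,s_t)(s_{t+1}-s_t) \ge 0$ for all $s \in \mathcal{K}$, then $(H\cdot S)_T(s) = 0$ for all $s \in \mathcal{K}$; in fact $H_t(s_1,\ldots,s_t) = 0$ whenever $s_t > 0$. -/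
/-!
At any node of a reasonable path space the market can always move against the current
position (a price at `0` stays there), so from every node there is a continuation on which no
later trade gains. Hence nonnegative terminal gains force nonnegative gains at every time. By
induction on `t`, the gains up to time `t` then vanish on all of `K`, and a nonzero position at
a positive price would make the gain at time `t + 1` negative on the adverse branch.
-/

open Set

structure IsReasonablePathSpace (T : ℕ) (K : Set (ℕ → ℝ)) : Prop where
  nonneg : ∀ s ∈ K, ∀ t, 0 ≤ s t
  branch : ∀ s ∈ K, ∀ t < T, 0 < s t →
    (∃ s' ∈ K, EqOn s' s (Iic t) ∧ s' (t + 1) < s t) ∧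
    (∃ s' ∈ K, EqOn s' s (Iic t) ∧ s t < s' (t + 1))
  absorb : ∀ s ∈ K, ∀ t ≤ T, s t = 0 → ∀ k, t + 1 ≤ k → k ≤ T → s k = 0

/-- The discrete stochastic integral `(H • S)_t` evaluated on the path `s`. -/
def gains (H : ℕ → (ℕ → ℝ) → ℝ) (s : ℕ → ℝ) (t : ℕ) : ℝ :=
  ∑ k ∈ Finset.range t, H k s * (s (k + 1) - s k)

theorem gains_succ (H : ℕ → (ℕ → ℝ) → ℝ) (s : ℕ → ℝ) (t : ℕ) :
    gains H s (t + 1) = gains H s t + H t s * (s (t + 1) - s t) :=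
  Finset.sum_range_succ _ _

namespace IsReasonablePathSpace

variable {T : ℕ} {K : Set (ℕ → ℝ)} {s : ℕ → ℝ} {t : ℕ}

theorem mul_sub_eq_zero (hK : IsReasonablePathSpace T K) (hs : s ∈ K) (ht : t < T) {h : ℝ}
    (hh : 0 < s t → h = 0) : h * (s (t + 1) - s t) = 0 := by
  rcases (hK.nonneg s hs t).eq_or_lt with h0 | hpos
  · rw [hK.absorb s hs t ht.le h0.symm (t + 1) le_rfl ht, ← h0, sub_self, mul_zero]
  · rw [hh hpos, zero_mul]

theorem exists_mul_sub_neg (hK : IsReasonablePathSpace T K) (hs : s ∈ K) (ht : t < T)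
    (hpos : 0 < s t) {h : ℝ} (hh : h ≠ 0) :
    ∃ s' ∈ K, EqOn s' s (Iic t) ∧ h * (s' (t + 1) - s t) < 0 := by
  obtain ⟨⟨sd, hsd, hagd, hdown⟩, ⟨su, hsu, hagu, hup⟩⟩ := hK.branch s hs t ht hpos
  rcases hh.lt_or_gt with hneg | hpos
  · exact ⟨su, hsu, hagu, mul_neg_of_neg_of_pos hneg (sub_pos.2 hup)⟩
  · exact ⟨sd, hsd, hagd, mul_neg_of_pos_of_neg hpos (sub_neg.2 hdown)⟩

end IsReasonablePathSpace

section Gains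

variable {T : ℕ} {K : Set (ℕ → ℝ)} {H : ℕ → (ℕ → ℝ) → ℝ}
  (hH : ∀ t < T, ∀ s s' : ℕ → ℝ, EqOn s s' (Iic t) → H t s = H t s')
include hH

theorem gains_congr {t : ℕ} (ht : t ≤ T) {s s' : ℕ → ℝ} (h : EqOn s s' (Iic t)) :
    gains H s t = gains H s' t := by
  refine Finset.sum_congr rfl fun k hk => ?_
  have hk : k < t := Finset.mem_range.1 hk
  rw [hH k (by omega) s s' (h.mono (Iic_subset_Iic.2 hk.le)),
    h (mem_Iic.2 (Nat.succ_le_of_lt hk)), h (mem_Iic.2 hk.le)]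

theorem gains_succ_of_eqOn {t : ℕ} (ht : t < T) {s s' : ℕ → ℝ} (h : EqOn s' s (Iic t)) :
    gains H s' (t + 1) = gains H s t + H t s * (s' (t + 1) - s t) := by
  rw [gains_succ, gains_congr hH ht.le h, hH t ht s' s h, h (mem_Iic.2 le_rfl)]

variable (hK : IsReasonablePathSpace T K)
include hK

theorem exists_gains_succ_le {s : ℕ → ℝ} (hs : s ∈ K) {t : ℕ} (ht : t < T) :
    ∃ s' ∈ K, EqOn s' s (Iic t) ∧ gains H s' (t + 1) ≤ gains H s t := by
  by_cases hbad : 0 < s t ∧ H t s ≠ 0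
  · obtain ⟨s', hs', hag, hneg⟩ := hK.exists_mul_sub_neg hs ht hbad.1 hbad.2
    exact ⟨s', hs', hag, by rw [gains_succ_of_eqOn hH ht hag]; linarith⟩
  · refine ⟨s, hs, eqOn_refl _ _, ?_⟩
    rw [gains_succ, hK.mul_sub_eq_zero hs ht fun hpos => not_not.1 (not_and.1 hbad hpos),
      add_zero]

theorem exists_gains_le (n : ℕ) {t : ℕ} (htn : t + n ≤ T) {s : ℕ → ℝ} (hs : s ∈ K) :
    ∃ s' ∈ K, EqOn s' s (Iic t) ∧ gains H s' (t + n) ≤ gains H s t := by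
  induction n with
  | zero => exact ⟨s, hs, eqOn_refl _ _, le_rfl⟩
  | succ n ih =>
    obtain ⟨s', hs', hag', hle'⟩ := ih (by omega)
    obtain ⟨s'', hs'', hag'', hle''⟩ := exists_gains_succ_le hH hK hs' (t := t + n) (by omega)
    exact ⟨s'', hs'', (hag''.mono (Iic_subset_Iic.2 (Nat.le_add_right t n))).trans hag',
      hle''.trans hle'⟩

variable (hnn : ∀ s ∈ K, 0 ≤ gains H s T)
include hnn

theorem gains_nonneg {t : ℕ} (ht : t ≤ T) {s : ℕ → ℝ} (hs : s ∈ K) : 0 ≤ gains H s t := by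
  obtain ⟨s', hs', -, hle⟩ := exists_gains_le hH hK (T - t) (t := t) (by omega) hs
  rw [Nat.add_sub_cancel' ht] at hle
  exact (hnn s' hs').trans hle

theorem position_eq_zero {t : ℕ} (ht : t < T) (hzero : ∀ s ∈ K, gains H s t = 0)
    {s : ℕ → ℝ} (hs : s ∈ K) (hpos : 0 < s t) : H t s = 0 := by
  by_contra hne
  obtain ⟨s', hs', hag, hneg⟩ := hK.exists_mul_sub_neg hs ht hpos hne
  have hgain : gains H s' (t + 1) < 0 := by
    rw [gains_succ_of_eqOn hH ht hag, hzero s hs, zero_add]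
    exact hneg
  exact hgain.not_ge (gains_nonneg hH hK hnn ht hs')

theorem gains_eq_zero (t : ℕ) (ht : t ≤ T) : ∀ s ∈ K, gains H s t = 0 := by
  induction t with
  | zero => simp [gains]
  | succ t ih =>
    intro s hs
    have hzero := ih (by omega)
    rw [gains_succ, hzero s hs, zero_add]
    exact hK.mul_sub_eq_zero hs ht (position_eq_zero hH hK hnn ht hzero hs)

end Gains

theorem stmt2_general (T : ℕ) (K : Set (ℕ → ℝ))
    (hKpos : ∀ s ∈ K, ∀ t, 0 ≤ s t)
    (hbranch : ∀ s ∈ K, ∀ t, t < T → 0 < s t →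
      (∃ s' ∈ K, (∀ j, j ≤ t → s' j = s j) ∧ s' (t + 1) < s t) ∧
      (∃ s' ∈ K, (∀ j, j ≤ t → s' j = s j) ∧ s t < s' (t + 1)))
    (habsorb : ∀ s ∈ K, ∀ t, t ≤ T → s t = 0 → ∀ k, t + 1 ≤ k → k ≤ T → s k = 0)
    (H : ℕ → (ℕ → ℝ) → ℝ)
    (hH : ∀ t, t < T → ∀ s s' : ℕ → ℝ, (∀ j, j ≤ t → s j = s' j) → H t s = H t s')
    (hnn : ∀ s ∈ K, 0 ≤ ∑ t ∈ Finset.range T, H t s * (s (t + 1) - s t)) :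
    (∀ s ∈ K, ∑ t ∈ Finset.range T, H t s * (s (t + 1) - s t) = 0) ∧
    (∀ s ∈ K, ∀ t, t < T → 0 < s t → H t s = 0) := by
  have hK : IsReasonablePathSpace T K := ⟨hKpos, hbranch, habsorb⟩
  have hzero := gains_eq_zero hH hK hnn
  exact ⟨hzero T le_rfl, fun s hs t ht hpos =>
    position_eq_zero hH hK hnn ht (hzero t ht.le) hs hpos⟩

/-- On a reasonable path space `K`, pathwise nonnegativity of the terminal
gains of an adapted strategy `H` implies the gains vanish identically;
in fact `H t s = 0` whenever `s t > 0`. -/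
theorem stmt2 (T : ℕ) (K : Set (ℕ → ℝ))
    (hK1 : ∀ s ∈ K, s 0 = 1)
    (hKpos : ∀ s ∈ K, ∀ t, 0 ≤ s t)
    (hbranch : ∀ s ∈ K, ∀ t, t < T → 0 < s t →
      (∃ s' ∈ K, (∀ j, j ≤ t → s' j = s j) ∧ s' (t + 1) < s t) ∧
      (∃ s' ∈ K, (∀ j, j ≤ t → s' j = s j) ∧ s t < s' (t + 1)))
    (habsorb : ∀ s ∈ K, ∀ t, t ≤ T → s t = 0 → ∀ k, t + 1 ≤ k → k ≤ T → s k = 0)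
    (H : ℕ → (ℕ → ℝ) → ℝ)
    (hH : ∀ t, t < T → ∀ s s' : ℕ → ℝ, (∀ j, j ≤ t → s j = s' j) → H t s = H t s')
    (hnn : ∀ s ∈ K, 0 ≤ ∑ t ∈ Finset.range T, H t s * (s (t + 1) - s t)) :
    (∀ s ∈ K, ∑ t ∈ Finset.range T, H t s * (s (t + 1) - s t) = 0) ∧
    (∀ s ∈ K, ∀ t, t < T → 0 < s t → H t s = 0) :=
  stmt2_general T K hKpos hbranch habsorb H hH hnn
end

section
/- In the setting of the previous statement (finite filtered space, stopper minimizing, nature maximizing via $\mathcal{E}$), the stopping time $\tau^* = \inf\{t \ge 0 : f_t = X_t\}$ is optimal: $X_0 = \mathcal{E}[f_{\tau^*}] = \inf_{\tau \in \mathcal{T}} \mathcal{E}[f_\tau]$. -/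
/-! Adverse optimal stopping for nonlinear expectations on the product path space
`Ω = Ω₁^ℕ` (coordinates `0, …, T-1` are observed at times `1, …, T`), with `Ω₁` finite.
`R t ω` is the set of one-step transition laws available at time `t` in state `ω`;
the pasting-stable family `𝔯_t(ω)` is encoded by the recursively defined nonlinear
conditional expectation `NE`. -/

/-- The nonlinear conditional expectation `𝓔_t[ξ](ω) = sup_{P ∈ 𝔯_t(ω)} E_P[ξ(ω^t, ·)]`
obtained by backward recursion over the one-step kernel sets `R`. -/
noncomputable def NE {Ω₁ : Type*} [Fintype Ω₁] (T : ℕ)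
    (R : ℕ → (ℕ → Ω₁) → Set (Ω₁ → ℝ)) (t : ℕ) (ξ : (ℕ → Ω₁) → ℝ) : (ℕ → Ω₁) → ℝ :=
  if h : T ≤ t then ξ
  else fun ω =>
    sSup ((fun P : Ω₁ → ℝ =>
      ∑ x : Ω₁, P x * NE T R (t + 1) ξ (Function.update ω t x)) '' R t ω)
termination_by T - t
decreasing_by omega

/-- Stopping times of the raw filtration with values in `[t, T]`. -/
def IsStopAt {Ω₁ : Type*} (T t : ℕ) (τ : (ℕ → Ω₁) → ℕ) : Prop :=
  (∀ ω, t ≤ τ ω ∧ τ ω ≤ T) ∧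
  ∀ s : ℕ, ∀ ω ω' : ℕ → Ω₁, (∀ j, j < s → ω j = ω' j) → τ ω = s → τ ω' = s

/-- An adapted payoff process: `f t` depends only on the first `t` coordinates. -/
def AdaptedProc {Ω₁ : Type*} (T : ℕ) (f : ℕ → (ℕ → Ω₁) → ℝ) : Prop :=
  ∀ t ≤ T, ∀ ω ω' : ℕ → Ω₁, (∀ j, j < t → ω j = ω' j) → f t ω = f t ω'

/-- The one-step kernel sets are nonempty convex-free families of probability vectors,
depending only on the past. -/
def GoodKernels {Ω₁ : Type*} [Fintype Ω₁] (T : ℕ)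
    (R : ℕ → (ℕ → Ω₁) → Set (Ω₁ → ℝ)) : Prop :=
  ∀ t, t < T → ∀ ω : ℕ → Ω₁,
    (R t ω).Nonempty ∧
    (∀ P ∈ R t ω, (∀ x, 0 ≤ P x) ∧ ∑ x : Ω₁, P x = 1) ∧
    (∀ ω' : ℕ → Ω₁, (∀ j, j < t → ω j = ω' j) → R t ω = R t ω')

/-- The upper value process `X t = inf_{τ ∈ 𝒯_t} 𝓔_t[f_τ]`. -/
noncomputable def upValue {Ω₁ : Type*} [Fintype Ω₁] (T : ℕ)
    (R : ℕ → (ℕ → Ω₁) → Set (Ω₁ → ℝ)) (f : ℕ → (ℕ → Ω₁) → ℝ) (t : ℕ) :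
    (ℕ → Ω₁) → ℝ :=
  fun ω => ⨅ τ : {τ : (ℕ → Ω₁) → ℕ // IsStopAt T t τ},
    NE T R t (fun ω' => f (τ.1 ω') ω') ω

/-! The value process is the unique adapted solution `Y` of the dynamic programming equations
`Y T = f T`, `Y t = f t ⊓ 𝓔ₜ(Y (t+1))`. Monotonicity of the one-step operator shows, by backward
induction, that such a `Y` lies below `𝓔ₜ[f_τ]` for every stopping time `τ ≥ t`; and along the
first time `Y` meets `f` the inequality is an equality, since before that time the minimum is
always attained by the continuation value. An explicit backward recursion provides a solution,
so the value process is one, and its first hitting time of `f` is optimal. -/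

open Function

noncomputable def oneStep {Ω₁ : Type*} [Fintype Ω₁] (R : ℕ → (ℕ → Ω₁) → Set (Ω₁ → ℝ))
    (t : ℕ) (g : (ℕ → Ω₁) → ℝ) (ω : ℕ → Ω₁) : ℝ :=
  sSup ((fun P : Ω₁ → ℝ => ∑ x, P x * g (update ω t x)) '' R t ω)

lemma agree_of_agree_update {Ω₁ : Type*} {t : ℕ} {ω ω' : ℕ → Ω₁} {x : Ω₁}
    (h : ∀ j, j < t + 1 → ω' j = update ω t x j) : ∀ j, j < t → ω' j = ω j :=
  fun j hj => by simpa [update_of_ne hj.ne] using h j (by omega)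

lemma isLeast_of_forall_le_mem_iff {α : Type*} [LinearOrder α] {A B : Set α} {s : α}
    (hA : IsLeast A s) (h : ∀ r ≤ s, r ∈ A ↔ r ∈ B) : IsLeast B s :=
  ⟨(h s le_rfl).1 hA.1, fun r hr => le_of_not_gt fun hrs => hrs.not_ge (hA.2 ((h r hrs.le).2 hr))⟩

section NonlinearExpectation

variable {Ω₁ : Type*} [Fintype Ω₁] {T : ℕ} {R : ℕ → (ℕ → Ω₁) → Set (Ω₁ → ℝ)}

lemma NE_of_le {t : ℕ} (h : T ≤ t) (ξ : (ℕ → Ω₁) → ℝ) : NE T R t ξ = ξ := by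
  rw [NE]; simp [h]

lemma NE_of_lt {t : ℕ} (h : t < T) (ξ : (ℕ → Ω₁) → ℝ) :
    NE T R t ξ = oneStep R t (NE T R (t + 1) ξ) := by
  rw [NE]; simp [not_le.2 h]; rfl

lemma oneStep_congr {t : ℕ} {g g' : (ℕ → Ω₁) → ℝ} {ω : ℕ → Ω₁}
    (h : ∀ x, g (update ω t x) = g' (update ω t x)) : oneStep R t g ω = oneStep R t g' ω := by
  simp only [oneStep, h]

lemma bddAbove_oneStep_image (hR : GoodKernels T R) {t : ℕ} (ht : t < T) (g : (ℕ → Ω₁) → ℝ)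
    (ω : ℕ → Ω₁) : BddAbove ((fun P : Ω₁ → ℝ => ∑ x, P x * g (update ω t x)) '' R t ω) := by
  refine ⟨∑ x, |g (update ω t x)|, ?_⟩
  rintro _ ⟨P, hP, rfl⟩
  obtain ⟨hP0, hP1⟩ := (hR t ht ω).2.1 P hP
  refine Finset.sum_le_sum fun x _ => ?_
  have hPx : P x ≤ 1 := hP1 ▸ Finset.single_le_sum (fun y _ => hP0 y) (Finset.mem_univ x)
  exact (mul_le_mul_of_nonneg_left (le_abs_self _) (hP0 x)).trans
    (mul_le_of_le_one_left (abs_nonneg _) hPx)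

lemma oneStep_mono (hR : GoodKernels T R) {t : ℕ} (ht : t < T) {g g' : (ℕ → Ω₁) → ℝ}
    {ω : ℕ → Ω₁} (h : ∀ x, g (update ω t x) ≤ g' (update ω t x)) :
    oneStep R t g ω ≤ oneStep R t g' ω := by
  refine csSup_le ((hR t ht ω).1.image _) ?_
  rintro _ ⟨P, hP, rfl⟩
  refine le_csSup_of_le (bddAbove_oneStep_image hR ht g' ω) ⟨P, hP, rfl⟩ ?_
  exact Finset.sum_le_sum fun x _ =>
    mul_le_mul_of_nonneg_left (h x) (((hR t ht ω).2.1 P hP).1 x)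

lemma oneStep_eq_const (hR : GoodKernels T R) {t : ℕ} (ht : t < T) {g : (ℕ → Ω₁) → ℝ}
    {ω : ℕ → Ω₁} {c : ℝ} (h : ∀ x, g (update ω t x) = c) : oneStep R t g ω = c := by
  have hsum : ∀ P ∈ R t ω, ∑ x, P x * g (update ω t x) = c := fun P hP => by
    simp only [h, ← Finset.sum_mul, ((hR t ht ω).2.1 P hP).2, one_mul]
  rw [oneStep, Set.image_congr hsum, (hR t ht ω).1.image_const, csSup_singleton]

lemma oneStep_eq_of_agree (hR : GoodKernels T R) {t : ℕ} (ht : t < T) {g : (ℕ → Ω₁) → ℝ}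
    {ω ω' : ℕ → Ω₁} (hω : ∀ j, j < t → ω j = ω' j)
    (h : ∀ x, g (update ω t x) = g (update ω' t x)) : oneStep R t g ω = oneStep R t g ω' := by
  simp only [oneStep, h, (hR t ht ω).2.2 ω' hω]

lemma NE_congr {t : ℕ} {ξ ξ' : (ℕ → Ω₁) → ℝ} {ω : ℕ → Ω₁}
    (h : ∀ ω', (∀ j, j < t → ω' j = ω j) → ξ ω' = ξ' ω') : NE T R t ξ ω = NE T R t ξ' ω := by
  rcases le_or_gt T t with hT | ht
  · rw [NE_of_le hT, NE_of_le hT]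
    exact h ω fun _ _ => rfl
  · rw [NE_of_lt ht, NE_of_lt ht]
    exact oneStep_congr fun x => NE_congr fun ω' hω' => h ω' (agree_of_agree_update hω')
termination_by T - t

lemma NE_const (hR : GoodKernels T R) (c : ℝ) {t : ℕ} : NE T R t (fun _ => c) = fun _ => c := by
  rcases le_or_gt T t with hT | ht
  · exact NE_of_le hT _
  · funext ω
    rw [NE_of_lt ht, NE_const hR c]
    exact oneStep_eq_const hR ht fun _ => rfl
termination_by T - t

lemma NE_eq_of_forall_agree_eq (hR : GoodKernels T R) {t : ℕ} {ξ : (ℕ → Ω₁) → ℝ}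
    {ω : ℕ → Ω₁} {c : ℝ} (h : ∀ ω', (∀ j, j < t → ω' j = ω j) → ξ ω' = c) : NE T R t ξ ω = c :=
  (NE_congr h).trans (congrFun (NE_const hR c) ω)

end NonlinearExpectation

section FirstHit

variable {Ω₁ : Type*} {T : ℕ} {f Y : ℕ → (ℕ → Ω₁) → ℝ}

lemma IsStopAt.of_le {s t : ℕ} {τ : (ℕ → Ω₁) → ℕ} (hτ : IsStopAt T t τ) (hst : s ≤ t) :
    IsStopAt T s τ :=
  ⟨fun ω => ⟨hst.trans (hτ.1 ω).1, (hτ.1 ω).2⟩, hτ.2⟩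

noncomputable def firstHit (f Y : ℕ → (ℕ → Ω₁) → ℝ) (u : ℕ) (ω : ℕ → Ω₁) : ℕ :=
  sInf {s | u ≤ s ∧ f s ω = Y s ω}

lemma isLeast_firstHit {u : ℕ} (hYT : ∀ ω, Y T ω = f T ω) (huT : u ≤ T) (ω : ℕ → Ω₁) :
    IsLeast {s | u ≤ s ∧ f s ω = Y s ω} (firstHit f Y u ω) :=
  ⟨Nat.sInf_mem ⟨T, huT, (hYT ω).symm⟩, fun _ hs => Nat.sInf_le hs⟩

lemma firstHit_le {u : ℕ} (hYT : ∀ ω, Y T ω = f T ω) (huT : u ≤ T) (ω : ℕ → Ω₁) :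
    firstHit f Y u ω ≤ T :=
  (isLeast_firstHit hYT huT ω).2 ⟨huT, (hYT ω).symm⟩

lemma isStopAt_firstHit (hf : AdaptedProc T f) (hYad : AdaptedProc T Y)
    (hYT : ∀ ω, Y T ω = f T ω) {u : ℕ} (huT : u ≤ T) : IsStopAt T u (firstHit f Y u) := by
  refine ⟨fun ω => ⟨(isLeast_firstHit hYT huT ω).1.1, firstHit_le hYT huT ω⟩, ?_⟩
  rintro s ω ω' hω rfl
  refine (isLeast_of_forall_le_mem_iff (isLeast_firstHit hYT huT ω) fun r hr => ?_).csInf_eq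
  have hrT := hr.trans (firstHit_le hYT huT ω)
  have hagree : ∀ j, j < r → ω j = ω' j := fun j hj => hω j (hj.trans_le hr)
  simp only [Set.mem_ofPred_eq, hf r hrT ω ω' hagree, hYad r hrT ω ω' hagree]

end FirstHit

section DynamicProgramming

variable {Ω₁ : Type*} [Fintype Ω₁] {T : ℕ} {R : ℕ → (ℕ → Ω₁) → Set (Ω₁ → ℝ)}
  {f Y : ℕ → (ℕ → Ω₁) → ℝ}

def IsDPPSolution (T : ℕ) (R : ℕ → (ℕ → Ω₁) → Set (Ω₁ → ℝ)) (f Y : ℕ → (ℕ → Ω₁) → ℝ) :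
    Prop :=
  (∀ ω, Y T ω = f T ω) ∧ ∀ t < T, ∀ ω, Y t ω = min (f t ω) (oneStep R t (Y (t + 1)) ω)

/-- The hypothesis `t ≤ τ` is only required on the cylinder of `ω` at time `t`, so that the
induction can pass to `t + 1` without modifying `τ`. -/
lemma IsDPPSolution.le_NE (hR : GoodKernels T R) (hf : AdaptedProc T f)
    (hY : IsDPPSolution T R f Y) {τ : (ℕ → Ω₁) → ℕ} (hτ : IsStopAt T 0 τ) {t : ℕ}
    (ω : ℕ → Ω₁) (htτ : ∀ ω', (∀ j, j < t → ω' j = ω j) → t ≤ τ ω') :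
    Y t ω ≤ NE T R t (fun ω' => f (τ ω') ω') ω := by
  rcases le_or_gt T t with hT | ht
  · have hτω : τ ω = t := le_antisymm ((hτ.1 ω).2.trans hT) (htτ ω fun _ _ => rfl)
    obtain rfl : t = T := le_antisymm (hτω ▸ (hτ.1 ω).2) hT
    rw [NE_of_le hT, hτω, hY.1]
  rw [hY.2 t ht ω]
  by_cases hstop : τ ω = t
  · refine (min_le_left _ _).trans (NE_eq_of_forall_agree_eq hR fun ω' hω' => ?_).ge
    rw [hτ.2 t ω ω' (fun j hj => (hω' j hj).symm) hstop]
    exact hf t ht.le ω' ω hω'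
  · rw [NE_of_lt ht]
    refine (min_le_right _ _).trans (oneStep_mono hR ht fun x => ?_)
    refine hY.le_NE hR hf hτ _ fun ω' hω' => ?_
    have hω't := agree_of_agree_update hω'
    have hne : τ ω' ≠ t := fun h => hstop (hτ.2 t ω' ω hω't h)
    exact lt_of_le_of_ne (htτ ω' hω't) hne.symm
termination_by T - t

/-- Before `firstHit` the minimum in the dynamic programming equation is the continuation value,
so `𝓔ₜ` can be pushed through one step at a time. -/
lemma IsDPPSolution.NE_firstHit (hR : GoodKernels T R) (hf : AdaptedProc T f)
    (hY : IsDPPSolution T R f Y) (hYad : AdaptedProc T Y) {u t : ℕ} (huT : u ≤ T) (hut : u ≤ t)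
    (ω : ℕ → Ω₁) (htσ : ∀ ω', (∀ j, j < t → ω' j = ω j) → t ≤ firstHit f Y u ω') :
    NE T R t (fun ω' => f (firstHit f Y u ω') ω') ω = Y t ω := by
  have hσT := firstHit_le hY.1 huT
  rcases le_or_gt T t with hT | ht
  · have hσω : firstHit f Y u ω = t := le_antisymm ((hσT ω).trans hT) (htσ ω fun _ _ => rfl)
    obtain rfl : t = T := le_antisymm (hσω ▸ hσT ω) hT
    rw [NE_of_le hT, hσω, hY.1]
  have hhit_iff : ∀ ω', (∀ j, j < t → ω' j = ω j) → (f t ω' = Y t ω' ↔ f t ω = Y t ω) :=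
    fun ω' hω' => by rw [hf t ht.le ω' ω hω', hYad t ht.le ω' ω hω']
  by_cases hhit : f t ω = Y t ω
  · rw [← hhit]
    refine NE_eq_of_forall_agree_eq hR fun ω' hω' => ?_
    have hσ : firstHit f Y u ω' = t :=
      le_antisymm (Nat.sInf_le ⟨hut, (hhit_iff ω' hω').2 hhit⟩) (htσ ω' hω')
    rw [hσ, hf t ht.le ω' ω hω']
  · have hcont : Y t ω = oneStep R t (Y (t + 1)) ω :=
      ((min_choice _ _).resolve_left fun h => hhit (h ▸ hY.2 t ht ω).symm) ▸ hY.2 t ht ω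
    rw [hcont, NE_of_lt ht]
    refine oneStep_congr fun x => hY.NE_firstHit hR hf hYad huT (by omega) _ fun ω' hω' => ?_
    have hω't := agree_of_agree_update hω'
    have hne : firstHit f Y u ω' ≠ t := fun h =>
      hhit ((hhit_iff ω' hω't).1 (h ▸ (isLeast_firstHit hY.1 huT ω').1.2))
    exact lt_of_le_of_ne (htσ ω' hω't) hne.symm
termination_by T - t

lemma IsDPPSolution.upValue_eq (hR : GoodKernels T R) (hf : AdaptedProc T f)
    (hY : IsDPPSolution T R f Y) (hYad : AdaptedProc T Y) {t : ℕ} (ht : t ≤ T) :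
    upValue T R f t = Y t := by
  funext ω
  have hσ := isStopAt_firstHit hf hYad hY.1 ht
  have hlow : ∀ τ : {τ : (ℕ → Ω₁) → ℕ // IsStopAt T t τ},
      Y t ω ≤ NE T R t (fun ω' => f (τ.1 ω') ω') ω :=
    fun τ => hY.le_NE hR hf (τ.2.of_le t.zero_le) ω fun ω' _ => (τ.2.1 ω').1
  refine le_antisymm ?_ (@le_ciInf _ _ _ ⟨⟨_, hσ⟩⟩ _ _ hlow)
  refine (ciInf_le ⟨_, Set.forall_mem_range.2 hlow⟩ ⟨_, hσ⟩).trans_eq ?_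
  exact hY.NE_firstHit hR hf hYad ht le_rfl ω fun ω' _ => (hσ.1 ω').1

noncomputable def snellEnvelope (T : ℕ) (R : ℕ → (ℕ → Ω₁) → Set (Ω₁ → ℝ))
    (f : ℕ → (ℕ → Ω₁) → ℝ) (t : ℕ) : (ℕ → Ω₁) → ℝ :=
  if T ≤ t then f t else fun ω => min (f t ω) (oneStep R t (snellEnvelope T R f (t + 1)) ω)
termination_by T - t

lemma snellEnvelope_of_le {t : ℕ} (h : T ≤ t) : snellEnvelope T R f t = f t := by
  rw [snellEnvelope]; simp [h]

lemma snellEnvelope_of_lt {t : ℕ} (h : t < T) (ω : ℕ → Ω₁) :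
    snellEnvelope T R f t ω = min (f t ω) (oneStep R t (snellEnvelope T R f (t + 1)) ω) := by
  rw [snellEnvelope]; simp [not_le.2 h]

lemma isDPPSolution_snellEnvelope : IsDPPSolution T R f (snellEnvelope T R f) :=
  ⟨fun ω => by rw [snellEnvelope_of_le le_rfl], fun _ ht => snellEnvelope_of_lt ht⟩

lemma adaptedProc_snellEnvelope (hR : GoodKernels T R) (hf : AdaptedProc T f) :
    AdaptedProc T (snellEnvelope T R f) := by
  intro t htT ω ω' hω
  rcases htT.eq_or_lt with rfl | ht
  · rw [snellEnvelope_of_le le_rfl]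
    exact hf t le_rfl ω ω' hω
  rw [snellEnvelope_of_lt ht, snellEnvelope_of_lt ht, hf t htT ω ω' hω]
  congr 1
  refine oneStep_eq_of_agree hR ht hω fun x => adaptedProc_snellEnvelope hR hf (t + 1) ht _ _ ?_
  intro j hj
  rcases eq_or_ne j t with rfl | hne
  · simp
  · simp [update_of_ne hne, hω j (by omega)]
termination_by t => T - t

lemma isDPPSolution_upValue_and_adaptedProc (hR : GoodKernels T R) (hf : AdaptedProc T f) :
    IsDPPSolution T R f (upValue T R f) ∧ AdaptedProc T (upValue T R f) := by
  have hV := isDPPSolution_snellEnvelope (T := T) (R := R) (f := f)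
  have heq : ∀ t ≤ T, upValue T R f t = snellEnvelope T R f t :=
    fun _ => hV.upValue_eq hR hf (adaptedProc_snellEnvelope hR hf)
  refine ⟨⟨fun ω => by rw [heq T le_rfl, hV.1], fun t ht ω => ?_⟩, fun t ht => ?_⟩
  · rw [heq t ht.le, heq (t + 1) ht, hV.2 t ht ω]
  · rw [heq t ht]
    exact adaptedProc_snellEnvelope hR hf t ht

end DynamicProgramming

theorem stmt10_general {Ω₁ : Type*} [Fintype Ω₁] (T : ℕ)
    (R : ℕ → (ℕ → Ω₁) → Set (Ω₁ → ℝ)) (f : ℕ → (ℕ → Ω₁) → ℝ)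
    (hR : GoodKernels T R) (hf : AdaptedProc T f) :
    IsStopAt T 0 (fun ω => sInf {t : ℕ | f t ω = upValue T R f t ω}) ∧
    (∀ ω, upValue T R f 0 ω =
      NE T R 0 (fun ω' => f (sInf {t : ℕ | f t ω' = upValue T R f t ω'}) ω') ω) ∧
    (∀ ω, upValue T R f 0 ω =
      ⨅ τ : {τ : (ℕ → Ω₁) → ℕ // IsStopAt T 0 τ},
        NE T R 0 (fun ω' => f (τ.1 ω') ω') ω) := by
  obtain ⟨hX, hXad⟩ := isDPPSolution_upValue_and_adaptedProc hR hf
  have hτ : ∀ ω, sInf {t : ℕ | f t ω = upValue T R f t ω} = firstHit f (upValue T R f) 0 ω := by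
    simp [firstHit]
  simp only [hτ]
  refine ⟨isStopAt_firstHit hf hXad hX.1 T.zero_le, fun ω => ?_, fun _ => rfl⟩
  exact (hX.NE_firstHit hR hf hXad T.zero_le le_rfl ω fun _ _ => Nat.zero_le _).symm

/-- Optimality of the first hitting time `τ* = inf {t : f t = X t}` for the adverse
optimal stopping problem: `X 0 = 𝓔[f_{τ*}] = inf_τ 𝓔[f_τ]`. -/
theorem stmt10 {Ω₁ : Type*} [Fintype Ω₁] [Nonempty Ω₁] (T : ℕ)
    (R : ℕ → (ℕ → Ω₁) → Set (Ω₁ → ℝ)) (f : ℕ → (ℕ → Ω₁) → ℝ)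
    (hR : GoodKernels T R) (hf : AdaptedProc T f) :
    IsStopAt T 0 (fun ω => sInf {t : ℕ | f t ω = upValue T R f t ω}) ∧
    (∀ ω, upValue T R f 0 ω =
      NE T R 0 (fun ω' => f (sInf {t : ℕ | f t ω' = upValue T R f t ω'}) ω') ω) ∧
    (∀ ω, upValue T R f 0 ω =
      ⨅ τ : {τ : (ℕ → Ω₁) → ℕ // IsStopAt T 0 τ},
        NE T R 0 (fun ω' => f (τ.1 ω') ω') ω) :=
  stmt10_general T R f hR hf
end
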